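/- arXiv:1001.3662 — 2 statements merged into one kernel-verified Lean document; each statement's English description precedes it below -/
import Mathlib

section
/- Let $k$ be an algebraically closed field of characteristic $p > 0$ and let $V$ be a finite-dimensional $k$-vector space equipped with a bijective $p$-linear endomorphism $f$ (i.e., $f$ is additive, bijective, and $f(cv) = c^p f(v)$ for all $c \in k$, $v \in V$). Then $V$ has a $k$-basis $e_1, \dots, e_r$ with $f(e_i) = e_i$ for each $i$. -/
/-!
Writing `f` as a semilinear map over the Frobenius of `k`, the fixed vectors span a subspace `U`
on which `f` is onto and on which `f - id` is onto as well, since `t ^ p - t = c` is solvable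
in `k`. If `U ≠ V`, a fixed vector of the map induced on `V ⧸ U` lifts to a `v ∉ U` with
`f v - v ∈ U`, and correcting `v` by a preimage of `f v - v` under `f - id` gives a fixed
vector outside `U`. So everything rests on a nonzero fixed vector, found in a cyclic subspace:
if `f^[n + 1] w = ∑ i ≤ n, aᵢ • f^[i] w` is the first linear relation among the iterates
of `w`, then `a₀ ≠ 0` by injectivity, and `∑ i ≤ n, xᵢ • f^[i] w` is fixed as soon as
`x₀ = a₀ s`, `xᵢ₊₁ = xᵢ ^ p + aᵢ₊₁ s` and `xₙ ^ p = s`. The last condition is a separable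
polynomial equation of degree `p ^ (n + 1)` in `s`, so it has a nonzero solution.
-/

open Polynomial Set Submodule Function

theorem exists_pow_sub_self_eq {k : Type*} [Field k] [IsAlgClosed k] {p : ℕ} (hp : 1 < p)
    (a : k) : ∃ t : k, t ^ p - t = a := by
  have hdeg : (X ^ p - X - C a : k[X]).natDegree = p := by
    rw [natDegree_sub_C, natDegree_sub_eq_left_of_natDegree_lt] <;> simp [hp]
  obtain ⟨t, ht⟩ :=
    IsAlgClosed.exists_root _ (degree_ne_of_natDegree_ne (n := 0) (by rw [hdeg]; omega))
  exact ⟨t, by simpa [sub_eq_zero] using ht⟩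

theorem exists_linearIndepOn_range_and_mem_span {K V : Type*} [DivisionRing K] [AddCommGroup V]
    [Module K V] [Module.Finite K V] (g : ℕ → V) :
    ∃ n, LinearIndepOn K g (Finset.range n) ∧ g n ∈ span K (g '' Finset.range n) := by
  simp only [Finset.coe_range]
  by_contra! h
  have hind : ∀ n, LinearIndepOn K g (Iio n) := by
    intro n
    induction n with
    | zero => simp
    | succ n ih =>
      rw [Iio_add_one_eq_Iic, ← Iio_insert, linearIndepOn_insert (by simp)]
      exact ⟨ih, h n ih⟩
  have := (hind (Module.finrank K V + 1)).fintype_card_le_finrank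
  simp at this

theorem sum_smul_ne_zero_of_notMem_span {K V : Type*} [DivisionRing K] [AddCommGroup V]
    [Module K V] {g : ℕ → V} {n : ℕ} (hn : g n ∉ span K (g '' Finset.range n)) {c : ℕ → K}
    (hc : c n ≠ 0) : ∑ i ∈ Finset.range (n + 1), c i • g i ≠ 0 := by
  intro h
  rw [Finset.sum_range_succ, add_eq_zero_iff_neg_eq'] at h
  refine hn ((smul_mem_iff _ hc).1 ?_)
  rw [← neg_mem_iff, h]
  exact (mem_span_image_finset_iff_exists_fun' K).2 ⟨c, rfl⟩

theorem injective_mapQ_of_le_map {R M : Type*} [Ring R] [AddCommGroup M] [Module R M]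
    {σ : R →+* R} [RingHomSurjective σ] {f : M →ₛₗ[σ] M} (hf : Injective f)
    {U : Submodule R M} (hcomap : U ≤ U.comap f) (hmap : U ≤ U.map f) :
    Injective (U.mapQ U f hcomap) := by
  rw [← LinearMap.ker_eq_bot]
  refine ker_liftQ_eq_bot _ _ _ ?_
  rw [LinearMap.ker_comp, ker_mkQ]
  exact (comap_mono hmap).trans (comap_map_eq_of_injective hf U).le

noncomputable def fixedVectorPoly {k : Type*} [Field k] (p : ℕ) (a : ℕ → k) : ℕ → k[X]
  | 0 => C (a 0) * X
  | i + 1 => fixedVectorPoly p a i ^ p + C (a (i + 1)) * X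

section FixedVectorPoly

variable {k : Type*} [Field k] {p : ℕ} {a : ℕ → k}

theorem natDegree_fixedVectorPoly (hp : 1 < p) (ha : a 0 ≠ 0) (i : ℕ) :
    (fixedVectorPoly p a i).natDegree = p ^ i := by
  induction i with
  | zero => simp [fixedVectorPoly, natDegree_C_mul_X _ ha]
  | succ i ih =>
    have hlin : (C (a (i + 1)) * X).natDegree < (fixedVectorPoly p a i ^ p).natDegree := by
      rw [natDegree_pow, ih, ← pow_succ']
      exact ((natDegree_C_mul_le _ _).trans natDegree_X_le).trans_lt (Nat.one_lt_pow (by omega) hp)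
    rw [fixedVectorPoly, natDegree_add_eq_left_of_natDegree_lt hlin, natDegree_pow, ih, pow_succ']

theorem exists_ne_zero_eval_fixedVectorPoly_pow_eq_self [IsAlgClosed k] [Fact p.Prime]
    [CharP k p] (ha : a 0 ≠ 0) (n : ℕ) : ∃ s ≠ 0, (fixedVectorPoly p a n).eval s ^ p = s := by
  have hp : 1 < p := (Fact.out : p.Prime).one_lt
  set q := fixedVectorPoly p a n ^ p - X
  have hdeg : q.natDegree = p ^ (n + 1) := by
    have hX : (X : k[X]).natDegree < (fixedVectorPoly p a n ^ p).natDegree := by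
      rw [natDegree_pow, natDegree_fixedVectorPoly hp ha, natDegree_X, ← pow_succ']
      exact Nat.one_lt_pow (by omega) hp
    rw [natDegree_sub_eq_left_of_natDegree_lt hX, natDegree_pow, natDegree_fixedVectorPoly hp ha,
      pow_succ']
  have hsep : q.Separable := by
    rw [separable_def, show derivative q = -1 by simp [q, derivative_pow]]
    exact isCoprime_one_right.neg_right
  classical
  have hcard : 1 < q.roots.toFinset.card := by
    rw [Multiset.toFinset_card_of_nodup (nodup_roots hsep), IsAlgClosed.card_roots_eq_natDegree,
      hdeg]
    exact Nat.one_lt_pow (by omega) hp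
  obtain ⟨s, hs, hs0⟩ := Finset.exists_mem_ne hcard 0
  refine ⟨s, hs0, ?_⟩
  simpa [q, sub_eq_zero] using (mem_roots hsep.ne_zero).1 (Multiset.mem_toFinset.1 hs)

end FixedVectorPoly

section Semilinear

variable {k V : Type*} [Field k] {p : ℕ} [ExpChar k p] [AddCommGroup V] [Module k V]

instance [PerfectRing k p] : RingHomSurjective (frobenius k p) := ⟨surjective_frobenius k p⟩

section Cyclic

variable {f : V →ₛₗ[frobenius k p] V} {g : ℕ → V} (hg : ∀ i, f (g i) = g (i + 1)) {n : ℕ}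
  {a : ℕ → k} (hrel : g (n + 1) = ∑ i ∈ Finset.range (n + 1), a i • g i)
include hg hrel

theorem coeff_zero_ne_zero_of_iterate_eq_sum [PerfectRing k p] (hf : Injective f)
    (hn : g n ∉ span k (g '' Finset.range n)) : a 0 ≠ 0 := by
  intro ha0
  choose b hb using fun i => surjective_frobenius k p (a (i + 1))
  have : g n = ∑ i ∈ Finset.range n, b i • g i := by
    refine hf ?_
    rw [hg, hrel, Finset.sum_range_succ', ha0, zero_smul, add_zero, map_sum]
    refine Finset.sum_congr rfl fun i _ => ?_
    rw [map_smulₛₗ, hb, hg]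
  exact hn ((mem_span_image_finset_iff_exists_fun' k).2 ⟨b, this.symm⟩)

theorem apply_sum_eval_fixedVectorPoly_smul {s : k}
    (hs : (fixedVectorPoly p a n).eval s ^ p = s) :
    f (∑ i ∈ Finset.range (n + 1), (fixedVectorPoly p a i).eval s • g i) =
      ∑ i ∈ Finset.range (n + 1), (fixedVectorPoly p a i).eval s • g i := by
  set x : ℕ → k := fun i => (fixedVectorPoly p a i).eval s
  have hx_zero : x 0 = a 0 * s := by simp [x, fixedVectorPoly]
  have hx_succ (i : ℕ) : x (i + 1) = x i ^ p + a (i + 1) * s := by simp [x, fixedVectorPoly]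
  calc f (∑ i ∈ Finset.range (n + 1), x i • g i)
      = ∑ i ∈ Finset.range n, x i ^ p • g (i + 1) + x n ^ p • g (n + 1) := by
        rw [Finset.sum_range_succ, map_add, map_sum]
        simp only [map_smulₛₗ, frobenius_def, hg]
    _ = ∑ i ∈ Finset.range n, (x i ^ p + a (i + 1) * s) • g (i + 1) + (a 0 * s) • g 0 := by
        rw [hs, hrel, Finset.smul_sum, Finset.sum_range_succ']
        simp only [add_smul, Finset.sum_add_distrib, smul_smul, mul_comm s]
        abel
    _ = ∑ i ∈ Finset.range (n + 1), x i • g i := by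
        rw [Finset.sum_range_succ' _ n, hx_zero]
        simp only [hx_succ]

theorem exists_ne_zero_apply_eq_self_of_iterate_eq_sum [IsAlgClosed k] [Fact p.Prime] [CharP k p]
    (hf : Injective f) (hn : g n ∉ span k (g '' Finset.range n)) : ∃ v ≠ 0, f v = v := by
  obtain ⟨s, hs0, hs⟩ := exists_ne_zero_eval_fixedVectorPoly_pow_eq_self
    (coeff_zero_ne_zero_of_iterate_eq_sum hg hrel hf hn) n
  refine ⟨_, sum_smul_ne_zero_of_notMem_span hn ?_,
    apply_sum_eval_fixedVectorPoly_smul hg hrel hs⟩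
  intro h
  rw [h, zero_pow (Fact.out : p.Prime).ne_zero] at hs
  exact hs0 hs.symm

end Cyclic

theorem exists_ne_zero_apply_eq_self [IsAlgClosed k] [Fact p.Prime] [CharP k p]
    [FiniteDimensional k V] [Nontrivial V] {f : V →ₛₗ[frobenius k p] V} (hf : Injective f) :
    ∃ v ≠ 0, f v = v := by
  obtain ⟨w, hw⟩ := exists_ne (0 : V)
  set g : ℕ → V := fun i => f^[i] w
  have hg (i : ℕ) : f (g i) = g (i + 1) := (iterate_succ_apply' f i w).symm
  obtain ⟨n, hind, hspan⟩ := exists_linearIndepOn_range_and_mem_span (K := k) g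
  obtain ⟨m, rfl⟩ : ∃ m, n = m + 1 :=
    Nat.exists_eq_add_one.2 (Nat.pos_of_ne_zero (by rintro rfl; simp [g, hw] at hspan))
  rw [Finset.range_add_one, Finset.coe_insert, linearIndepOn_insert (by simp)] at hind
  obtain ⟨a, ha⟩ := (mem_span_image_finset_iff_exists_fun' k).1 hspan
  exact exists_ne_zero_apply_eq_self_of_iterate_eq_sum hg ha.symm hf hind.2

variable (f : V →ₛₗ[frobenius k p] V)

theorem span_fixedPoints_le_comap : span k (fixedPoints f) ≤ (span k (fixedPoints f)).comap f :=
  span_le.2 fun v hv => by simpa [mem_comap, hv.eq] using subset_span hv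

theorem span_fixedPoints_le_map [PerfectRing k p] :
    span k (fixedPoints f) ≤ (span k (fixedPoints f)).map f := by
  rw [map_span]
  exact span_mono fun v hv => ⟨v, hv, hv.eq⟩

theorem exists_mem_span_fixedPoints_apply_sub_eq [IsAlgClosed k] [Fact p.Prime] {u : V}
    (hu : u ∈ span k (fixedPoints f)) : ∃ w ∈ span k (fixedPoints f), f w - w = u := by
  obtain ⟨n, c, e, rfl⟩ := mem_span_set'.1 hu
  choose t ht using fun i => exists_pow_sub_self_eq (Fact.out : p.Prime).one_lt (c i)
  have he (i : Fin n) : f (e i) = e i := (e i).2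
  refine ⟨∑ i, t i • (e i : V), sum_mem fun i _ => smul_mem _ _ (subset_span (e i).2), ?_⟩
  simp only [map_sum, map_smulₛₗ, frobenius_def, he, ← Finset.sum_sub_distrib, ← sub_smul, ht]

theorem span_fixedPoints_eq_top [IsAlgClosed k] [Fact p.Prime] [CharP k p]
    [FiniteDimensional k V] (hf : Injective f) : span k (fixedPoints f) = ⊤ := by
  set U := span k (fixedPoints f)
  by_contra hU
  have : Nontrivial (V ⧸ U) := Quotient.nontrivial_iff.2 hU
  obtain ⟨x, hx0, hx⟩ := exists_ne_zero_apply_eq_self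
    (injective_mapQ_of_le_map hf (span_fixedPoints_le_comap f) (span_fixedPoints_le_map f))
  obtain ⟨v, rfl⟩ := U.mkQ_surjective x
  rw [mkQ_apply, mapQ_apply, ← sub_eq_zero, ← Quotient.mk_sub, Quotient.mk_eq_zero] at hx
  obtain ⟨w, hwU, hw⟩ := exists_mem_span_fixedPoints_apply_sub_eq f hx
  have hfix : v - w ∈ U := subset_span (show f (v - w) = v - w by
    rw [map_sub]; linear_combination (norm := abel) -hw)
  exact hx0 ((Quotient.mk_eq_zero _).2 (by simpa using add_mem hfix hwU))

end Semilinear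

/-- Let `k` be an algebraically closed field of characteristic `p > 0` and
`V` a finite-dimensional `k`-vector space with a bijective `p`-linear endomorphism `f`
(additive, bijective, `f (c • v) = c ^ p • f v`).  Then `V` has a basis `e₁, …, e_r`
with `f eᵢ = eᵢ` for each `i`. -/
theorem stmt3 (k : Type*) [Field k] [IsAlgClosed k] (p : ℕ) [Fact p.Prime] [CharP k p]
    (V : Type*) [AddCommGroup V] [Module k V] [FiniteDimensional k V]
    (f : V →+ V) (hbij : Function.Bijective f)
    (hsemi : ∀ (c : k) (v : V), f (c • v) = c ^ p • f v) :
    ∃ b : Module.Basis (Fin (Module.finrank k V)) k V, ∀ i, f (b i) = b i := by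
  let F : V →ₛₗ[frobenius k p] V := { f with map_smul' := hsemi }
  have hspan : ⊤ ≤ span k (fixedPoints F) := (span_fixedPoints_eq_top F hbij.1).ge
  let b := Module.Basis.ofSpan hspan
  refine ⟨b.reindex (b.indexEquiv (Module.finBasis k V)), fun i => ?_⟩
  apply Module.Basis.ofSpan_subset hspan
  rw [← Module.Basis.range_reindex]
  exact mem_range_self i
end

section
/- Let $k$ be a perfect field of characteristic $p > 0$, $R = k[x_0,\dots,x_n]$, and write Frobenius as $F: \mathrm{Spec}(R') \to \mathrm{Spec}(R)$ with $R' = R$ viewed as an $R$-algebra via $r \mapsto r^p$. Let $\{b_{\bar e} = x_0^{e_0}\cdots x_n^{e_n} : 0 \leq e_i \leq p-1\}$ be the monomial basis of $R'$ over $R$ and $\{\tilde b_{\bar e}\}$ the dual basis of $\mathrm{Hom}_R(R', R)$. Then the $R'$-linear map $R' \to \mathrm{Hom}_R(R', R)$ sending $b_{\bar e} \mapsto \tilde b_{\overline{p-1} - \bar e}$ is an isomorphism of $R'$-modules, where $\overline{p-1} = (p-1, \dots, p-1)$. -/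
/-!
The map is the trace form `s ↦ (t ↦ φ (s * t))`, where `φ` reads off the coordinate of the top
monomial `b_{p-1,…,p-1}`. Since `x^m = (x^⌊m/p⌋) • b_{m mod p}` in `R'`, `φ (b_v * b_w)` is `1` when
`v + w = p - 1` entrywise and `0` otherwise, i.e. `φ (b_v * b_w) = b̃_{p-1-v} (b_w)`. So the trace
form sends the basis to a permutation of the dual basis, hence is an isomorphism, and it is
`R'`-linear because `φ (r * s * t) = φ (s * (r * t))`.
-/

open MvPolynomial

/-- `R` regarded as an `R`-algebra via the Frobenius endomorphism `r ↦ r ^ p`;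
this is the target `R'` of the Frobenius `Spec R' → Spec R`. -/
def FrobTwist (R : Type*) (p : ℕ) : Type _ := R

instance (R : Type*) [CommRing R] (p : ℕ) : CommRing (FrobTwist R p) := ‹CommRing R›

noncomputable instance (R : Type*) [CommRing R] (p : ℕ) [Fact p.Prime] [CharP R p] :
    Algebra R (FrobTwist R p) := (frobenius R p).toAlgebra

theorem Fin.val_add_val_mod_eq_sub_one_iff {p : ℕ} (a b : Fin p) :
    (a + b : ℕ) % p = p - 1 ↔ b = a.rev := by
  rw [Fin.ext_iff, Fin.val_rev]
  have := a.isLt; have := b.isLt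
  rcases lt_or_ge ((a : ℕ) + b) p with h | h
  · rw [Nat.mod_eq_of_lt h]; omega
  · rw [Nat.mod_eq_sub_mod h, Nat.mod_eq_of_lt (by omega)]; omega

theorem Fin.val_add_val_rev {p : ℕ} (a : Fin p) : (a : ℕ) + a.rev = p - 1 := by
  rw [Fin.val_rev]; omega

theorem Module.Basis.exists_equiv_dual_of_mul_eq_coord {R S ι : Type*} [CommRing R] [CommRing S]
    [Algebra R S] [Finite ι] [DecidableEq ι] (b : Module.Basis ι R S) (σ : Equiv.Perm ι)
    (φ : S →ₗ[R] R) (hφ : ∀ v w, φ (b v * b w) = b.coord (σ v) (b w)) :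
    ∃ e : S ≃ₗ[R] (S →ₗ[R] R),
      (∀ v, e (b v) = b.coord (σ v)) ∧ ∀ r s t, e (r * s) t = e s (r * t) := by
  set e := b.equiv b.dualBasis σ
  have he : ∀ v, e (b v) = b.coord (σ v) := fun v => by
    rw [b.equiv_apply, b.coe_dualBasis]
  have he_mul : e.toLinearMap = (LinearMap.mul R S).compr₂ φ :=
    b.ext fun v => b.ext fun w => by simp [he, hφ]
  refine ⟨e, he, fun r s t => ?_⟩
  have h := fun x => LinearMap.congr_fun (LinearMap.congr_fun he_mul x)
  simp only [LinearEquiv.coe_coe, LinearMap.compr₂_apply, LinearMap.mul_apply'] at h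
  rw [h, h, mul_assoc, mul_left_comm]

namespace FrobTwist

variable {A ι : Type*} [CommRing A] [Fintype ι] {p : ℕ} [Fact p.Prime] [CharP A p]
  (b : Module.Basis (ι → Fin p) (MvPolynomial ι A) (FrobTwist (MvPolynomial ι A) p))

theorem repr_prod_X_pow
    (hb : ∀ e : ι → Fin p, b e = (∏ i, X i ^ (e i : ℕ) : MvPolynomial ι A)) (m : ι → ℕ) :
    b.repr (∏ i, X i ^ m i : MvPolynomial ι A) =
      Finsupp.single (fun i => ⟨m i % p, Nat.mod_lt _ (Fact.out : p.Prime).pos⟩)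
        (∏ i, X i ^ (m i / p)) := by
  have hm : (∏ i, X i ^ m i : MvPolynomial ι A) =
      (∏ i, X i ^ (m i / p)) ^ p * ∏ i, X i ^ (m i % p) := by
    rw [← Finset.prod_pow, ← Finset.prod_mul_distrib]
    exact Finset.prod_congr rfl fun i _ => by rw [← pow_mul, ← pow_add, Nat.div_add_mod']
  have : (∏ i, X i ^ m i : MvPolynomial ι A) =
      (∏ i, X i ^ (m i / p) : MvPolynomial ι A) •
        b (fun i => ⟨m i % p, Nat.mod_lt _ (Fact.out : p.Prime).pos⟩) := by
    rw [Algebra.smul_def, hb]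
    exact hm
  rw [this, map_smul, b.repr_self, Finsupp.smul_single_one]

theorem coord_rev_zero_mul
    (hb : ∀ e : ι → Fin p, b e = (∏ i, X i ^ (e i : ℕ) : MvPolynomial ι A))
    (v w : ι → Fin p) :
    b.coord (Fin.rev ∘ 0) (b v * b w) = b.coord (Fin.rev ∘ v) (b w) := by
  have hvw : b v * b w = (∏ i, X i ^ ((v i : ℕ) + w i) : MvPolynomial ι A) := by
    rw [hb, hb]
    simp only [pow_add, Finset.prod_mul_distrib]
    rfl
  rw [Module.Basis.coord_apply, Module.Basis.coord_apply, hvw, repr_prod_X_pow b hb,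
    b.repr_self, Finsupp.single_apply, Finsupp.single_apply]
  by_cases h : w = Fin.rev ∘ v
  · subst h
    have hlt : p - 1 < p := Nat.sub_lt (Fact.out : p.Prime).pos one_pos
    simp only [Function.comp_apply, Fin.val_add_val_rev, Nat.mod_eq_of_lt hlt,
      Nat.div_eq_of_lt hlt, pow_zero, Finset.prod_const_one]
    exact if_pos (funext fun _ => Fin.ext (by simp))
  · rw [if_neg h, if_neg]
    contrapose! h
    funext i
    simpa [Fin.ext_iff, Fin.val_add_val_mod_eq_sub_one_iff] using congrFun h i

end FrobTwist

/-- Let `k` be a perfect field of characteristic `p > 0`,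
`R = k[x₀,…,xₙ]`, and `R' = R` viewed as an `R`-algebra via `r ↦ r ^ p`.  Let
`{b_ē = x₀^{e₀}⋯xₙ^{eₙ} : 0 ≤ eᵢ ≤ p-1}` be the monomial basis of `R'` over `R` and
`{b̃_ē}` the dual basis of `Hom_R(R', R)`.  Then the map `R' → Hom_R(R', R)` sending
`b_ē ↦ b̃_{(p-1)-ē}` is an isomorphism of `R'`-modules (`R'`-linearity of a map
`e : R' → Hom_R(R',R)` is expressed elementwise: `e (r' * s') t' = e s' (r' * t')`,
the `R'`-action on `Hom_R(R',R)` being through the domain). -/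
theorem stmt9 (k : Type*) [Field k] (p : ℕ) [Fact p.Prime] [CharP k p]
    (n : ℕ)
    (b : Module.Basis (Fin (n + 1) → Fin p) (MvPolynomial (Fin (n + 1)) k)
      (FrobTwist (MvPolynomial (Fin (n + 1)) k) p))
    (hb : ∀ e : Fin (n + 1) → Fin p,
      b e = (∏ i : Fin (n + 1), X i ^ (e i : ℕ) : MvPolynomial (Fin (n + 1)) k)) :
    ∃ e : FrobTwist (MvPolynomial (Fin (n + 1)) k) p ≃ₗ[MvPolynomial (Fin (n + 1)) k]
        (FrobTwist (MvPolynomial (Fin (n + 1)) k) p →ₗ[MvPolynomial (Fin (n + 1)) k]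
          MvPolynomial (Fin (n + 1)) k),
      (∀ v : Fin (n + 1) → Fin p,
          e (b v) = b.coord (fun i =>
            (⟨p - 1 - (v i : ℕ), by have := (Fact.out : p.Prime).pos; omega⟩ : Fin p))) ∧
      ∀ r' s' t' : FrobTwist (MvPolynomial (Fin (n + 1)) k) p,
        e (r' * s') t' = e s' (r' * t') := by
  obtain ⟨e, he, he_mul⟩ := b.exists_equiv_dual_of_mul_eq_coord
    (Equiv.piCongrRight fun _ => Fin.revPerm) (b.coord (Fin.rev ∘ 0))
    (FrobTwist.coord_rev_zero_mul b hb)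
  refine ⟨e, fun v => ?_, he_mul⟩
  rw [he]
  congr
  funext i
  exact Fin.ext ((Fin.val_rev (v i)).trans (by rw [Nat.add_comm, ← Nat.sub_sub]))
end
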